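/- arXiv:1510.01141 — 2 statements merged into one kernel-verified Lean document; each statement's English description precedes it below -/
import Mathlib

section
/- For every integer m ≥ 1, every integer r ≥ 2, every vector a = (a_1,…,a_r) of nonzero real numbers with a_1 + a_2 ≠ 0, and all x, x_3,…,x_r ∈ ℝ, one has ζ_fml(1−m, a, (x, x, x_3,…,x_r)) = ζ_fml(1−m, (a_1, a_1+a_2, a_3,…,a_r), (1, x, x_3,…,x_r)) + ζ_fml(1−m, (a_1+a_2, a_2, a_3,…,a_r), (x, 1, x_3,…,x_r)) + ζ_fml(1−m, (a_1+a_2, a_3,…,a_r), (x, x_3,…,x_r)). -/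
open scoped BigOperators

/-- The formal multiple zeta value `zetaFml m a x = ζ_fml(1 - m, a, x)` of the paper:
`(-1)^r (m-1)! ∑_{l, Σ l i = m + r - 1} ∏_i B_{l i}(x i) * (a i)^(l i - 1) / (l i)!`,
where `B_l` is the `l`-th Bernoulli polynomial (normalized with `B₁(X) = X - 1/2`)
and `(a i)^(l i - 1)` is an integer (`zpow`) power. -/
noncomputable def zetaFml (m : ℕ) {r : ℕ} (a x : Fin r → ℝ) : ℝ :=
  (-1 : ℝ) ^ r * (Nat.factorial (m - 1)) *
    ∑ l ∈ Finset.Nat.antidiagonalTuple r (m + r - 1),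
      ∏ i, Polynomial.aeval (x i) (Polynomial.bernoulli (l i)) * a i ^ ((l i : ℤ) - 1)
        / (Nat.factorial (l i))

/-! With `G_a(x) = ∑ₙ Bₙ(x) aⁿ⁻¹ tⁿ / n! = t e^{xat} / (e^{at} - 1)`, the value `zetaFml m a x` is,
up to the factor `(-1)^r (m-1)!`, the coefficient of `t^{m+r-1}` in `∏ᵢ G_{aᵢ}(xᵢ)`. The theorem
is therefore the coefficient of `t^{m+r+1}` in the power series identity
`G_{a₁}(x) G_{a₂}(x) + t G_{a₁+a₂}(x) = G_{a₁}(1) G_{a₁+a₂}(x) + G_{a₁+a₂}(x) G_{a₂}(1)`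
times `∏_{i ≥ 3} G_{aᵢ}(xᵢ)`, the factor `t` absorbing the drop of depth in the last term.
After clearing denominators that identity reads
`(E₁ - 1)(E₂ - 1) + (E₁E₂ - 1) = E₁(E₂ - 1) + E₂(E₁ - 1)` for `Eᵢ = e^{aᵢt}`. -/

open PowerSeries

theorem PowerSeries.coeff_prod_univ_fin {R : Type*} [CommSemiring R] {r : ℕ}
    (f : Fin r → R⟦X⟧) (n : ℕ) :
    coeff n (∏ i, f i) = ∑ l ∈ Finset.Nat.antidiagonalTuple r n, ∏ i, coeff (l i) (f i) := by
  rw [coeff_prod, Finset.finsuppAntidiag, Finset.sum_map,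
    ← Finset.piAntidiag_univ_fin_eq_antidiagonalTuple]
  exact Finset.sum_attach _ fun (l : Fin r → ℕ) => ∏ i, coeff (l i) (f i)

theorem PowerSeries.rescale_exp_sub_one_ne_zero {A : Type*} [CommRing A] [Algebra ℚ A] {t : A}
    (ht : t ≠ 0) : rescale t (exp A) - 1 ≠ 0 := by
  intro h
  exact ht (by simpa [coeff_rescale, coeff_exp] using congrArg (coeff 1) h)

noncomputable def bernoulliSeries (a x : ℝ) : ℝ⟦X⟧ :=
  mk fun n => Polynomial.aeval x (Polynomial.bernoulli n) * a ^ ((n : ℤ) - 1) / n.factorial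

theorem zetaFml_eq_coeff_prod_bernoulliSeries (m : ℕ) {r : ℕ} (a x : Fin r → ℝ) :
    zetaFml m a x = (-1) ^ r * (m - 1).factorial
      * coeff (m + r - 1) (∏ i, bernoulliSeries (a i) (x i)) := by
  simp only [zetaFml, coeff_prod_univ_fin, bernoulliSeries, coeff_mk]

theorem bernoulliSeries_mul_rescale_exp_sub_one {a : ℝ} (ha : a ≠ 0) (x : ℝ) :
    bernoulliSeries a x * (rescale a (exp ℝ) - 1) = X * rescale (x * a) (exp ℝ) := by
  have hgen := congrArg (rescale a) (Polynomial.bernoulli_generating_function (A := ℝ) x)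
  rw [map_mul, map_sub, map_one, map_mul, rescale_X, rescale_rescale] at hgen
  have hC : C a * bernoulliSeries a x
      = rescale a
          (mk fun n => Polynomial.aeval x ((1 / n.factorial : ℚ) • Polynomial.bernoulli n)) := by
    ext n
    simp only [bernoulliSeries, coeff_C_mul, coeff_rescale, coeff_mk, map_smul]
    rw [zpow_sub_one₀ ha, zpow_natCast, Rat.smul_def]
    push_cast
    field_simp
  rw [← hC] at hgen
  refine mul_left_cancel₀ ((map_ne_zero_iff C C_injective).mpr ha) ?_
  linear_combination hgen

theorem bernoulliSeries_cone_identity {a₁ a₂ : ℝ} (h₁ : a₁ ≠ 0) (h₂ : a₂ ≠ 0)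
    (h₁₂ : a₁ + a₂ ≠ 0) (x : ℝ) :
    bernoulliSeries a₁ x * bernoulliSeries a₂ x + X * bernoulliSeries (a₁ + a₂) x
      = bernoulliSeries a₁ 1 * bernoulliSeries (a₁ + a₂) x
        + bernoulliSeries (a₁ + a₂) x * bernoulliSeries a₂ 1 := by
  have g₁ := bernoulliSeries_mul_rescale_exp_sub_one h₁ x
  have g₂ := bernoulliSeries_mul_rescale_exp_sub_one h₂ x
  have g₁₂ := bernoulliSeries_mul_rescale_exp_sub_one h₁₂ x
  have g₁' := bernoulliSeries_mul_rescale_exp_sub_one h₁ 1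
  have g₂' := bernoulliSeries_mul_rescale_exp_sub_one h₂ 1
  rw [one_mul] at g₁' g₂'
  have e₁₂ := exp_mul_exp_eq_exp_add (A := ℝ) a₁ a₂
  have ex₁₂ := exp_mul_exp_eq_exp_add (A := ℝ) (x * a₁) (x * a₂)
  rw [← mul_add] at ex₁₂
  refine mul_right_cancel₀ (mul_ne_zero (mul_ne_zero (rescale_exp_sub_one_ne_zero h₁)
    (rescale_exp_sub_one_ne_zero h₂)) (rescale_exp_sub_one_ne_zero h₁₂)) ?_
  set D₁ := rescale a₁ (exp ℝ) - 1
  set D₂ := rescale a₂ (exp ℝ) - 1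
  set D₁₂ := rescale (a₁ + a₂) (exp ℝ) - 1
  set F := rescale (x * (a₁ + a₂)) (exp ℝ)
  linear_combination (bernoulliSeries a₂ x * D₂ * D₁₂) * g₁
    + (X * rescale (x * a₁) (exp ℝ) * D₁₂) * g₂
    + (X * D₁ * D₂ - bernoulliSeries a₁ 1 * D₁ * D₂ - bernoulliSeries a₂ 1 * D₂ * D₁) * g₁₂
    - (X * F * D₂) * g₁' - (X * F * D₁) * g₂' + (X ^ 2 * D₁₂) * ex₁₂ - (X ^ 2 * F) * e₁₂

theorem zetaFml_cone_subdivision_diag_general (m : ℕ) (r : ℕ) (a : Fin (r + 2) → ℝ)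
    (ha : ∀ i, a i ≠ 0) (h12 : a 0 + a 1 ≠ 0) (x : ℝ) (x' : Fin r → ℝ) :
    zetaFml m a (Fin.cons x (Fin.cons x x'))
      = zetaFml m (Function.update a 1 (a 0 + a 1)) (Fin.cons 1 (Fin.cons x x'))
        + zetaFml m (Function.update a 0 (a 0 + a 1)) (Fin.cons x (Fin.cons 1 x'))
        + zetaFml m (Fin.cons (a 0 + a 1) (fun i : Fin r => a i.succ.succ)) (Fin.cons x x') := by
  set G := bernoulliSeries
  set P := ∏ i : Fin r, G (a i.succ.succ) (x' i)
  have hcoeff : coeff (m + r + 1) (G (a 0) x * (G (a 1) x * P))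
        + coeff (m + r) (G (a 0 + a 1) x * P)
      = coeff (m + r + 1) (G (a 0) 1 * (G (a 0 + a 1) x * P))
        + coeff (m + r + 1) (G (a 0 + a 1) x * (G (a 1) 1 * P)) := by
    rw [← coeff_succ_X_mul (m + r), ← map_add, ← map_add]
    congr 1
    linear_combination P * bernoulliSeries_cone_identity (ha 0) (ha 1) h12 x
  simp only [zetaFml_eq_coeff_prod_bernoulliSeries, Fin.prod_univ_succ, Fin.cons_zero,
    Fin.cons_succ, Fin.succ_zero_eq_one, Function.update_self,
    Function.update_of_ne Fin.zero_ne_one,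
    Function.update_of_ne (Fin.succ_succ_ne_one _), Function.update_of_ne (Fin.succ_ne_zero _),
    show m + (r + 2) - 1 = m + r + 1 by omega, show m + (r + 1) - 1 = m + r by omega]
  linear_combination (-1) ^ r * ((m - 1).factorial : ℝ) * hcoeff

theorem zetaFml_cone_subdivision_diag (m : ℕ) (hm : 1 ≤ m) (r : ℕ) (a : Fin (r + 2) → ℝ)
    (ha : ∀ i, a i ≠ 0) (h12 : a 0 + a 1 ≠ 0) (x : ℝ) (x' : Fin r → ℝ) :
    zetaFml m a (Fin.cons x (Fin.cons x x'))
      = zetaFml m (Function.update a 1 (a 0 + a 1)) (Fin.cons 1 (Fin.cons x x'))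
        + zetaFml m (Function.update a 0 (a 0 + a 1)) (Fin.cons x (Fin.cons 1 x'))
        + zetaFml m (Fin.cons (a 0 + a 1) (fun i : Fin r => a i.succ.succ)) (Fin.cons x x') :=
  zetaFml_cone_subdivision_diag_general m r a ha h12 x x'
end

section
/- Let F be a totally real number field of degree n ≥ 2 with real embeddings ι₁,…,ι_n, let r ≥ 2, and let v = (v_1,…,v_r) ∈ F^r with all v_p ≠ 0 and v_1 + v_2 ≠ 0. Set v♯ := (v_1, v_1+v_2, v_3,…,v_r), v♭ := (v_1+v_2, v_2, v_3,…,v_r) and v♮ := (v_1+v_2, v_3,…,v_r), and assume each of the three tuples v, v♯, v♭ satisfies the nondegeneracy condition ι_i(w_q)ι_k(w_p) ≠ ι_i(w_p)ι_k(w_q) for all i ≠ k and p ≠ q (w denoting the respective tuple), and likewise for v♮. Then for every x = (x_1,…,x_r) ∈ ℝ^r: (a) V(v, x) = V(v♯, (x_1−x_2+1, x_2, x_3,…,x_r)) + V(v♭, (x_1, x_2−x_1, x_3,…,x_r)); and (b) for every x ∈ ℝ and x_3,…,x_r ∈ ℝ, V(v, (x, x, x_3,…,x_r)) = V(v♯,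 (1, x, x_3,…,x_r)) + V(v♭, (x, 1, x_3,…,x_r)) + V(v♮, (x, x_3,…,x_r)). -/
open scoped BigOperators

/-- The `V`-term of the paper, for a totally real field `F` of degree `n + 1` whose real
embeddings are enumerated by `emb : Fin (n+1) → (F →+* ℝ)` (with `ι₁ = emb 0`), a vector
`v : Fin (s+1) → F` of nonzero elements, and `x : Fin (s+1) → ℝ`:
`V(v,x) = -(1/n) ∑_{k ≠ 0} ∑_p ζ_fml(-1, (ι₁(v_q)/ι₁(v_p) - ι_k(v_q)/ι_k(v_p))_{q≠p}, (x_q)_{q≠p})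
  · log|ι₁(v_p)/ι_k(v_p)|
  + (1/n²) ∑_{i < k} ∑_p ζ_fml(-1, (ι_i(v_q)/ι_i(v_p) - ι_k(v_q)/ι_k(v_p))_{q≠p}, (x_q)_{q≠p})
  · log|ι_i(v_p)/ι_k(v_p)|`. -/
noncomputable def Vterm {F : Type*} [Field F] {n s : ℕ} (emb : Fin (n + 1) → (F →+* ℝ))
    (v : Fin (s + 1) → F) (x : Fin (s + 1) → ℝ) : ℝ :=
  -(1 / (n + 1 : ℝ)) *
      ∑ k ∈ Finset.univ.filter (fun k : Fin (n + 1) => k ≠ 0), ∑ p : Fin (s + 1),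
        zetaFml 2
          (fun q : Fin s =>
            emb 0 (v (p.succAbove q)) / emb 0 (v p) - emb k (v (p.succAbove q)) / emb k (v p))
          (fun q : Fin s => x (p.succAbove q))
        * Real.log |emb 0 (v p) / emb k (v p)|
    + (1 / (n + 1 : ℝ) ^ 2) *
      ∑ i : Fin (n + 1), ∑ k ∈ Finset.univ.filter (fun k : Fin (n + 1) => i < k),
        ∑ p : Fin (s + 1),
          zetaFml 2
            (fun q : Fin s =>
              emb i (v (p.succAbove q)) / emb i (v p) - emb k (v (p.succAbove q)) / emb k (v p))
            (fun q : Fin s => x (p.succAbove q))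
          * Real.log |emb i (v p) / emb k (v p)|

/-- The nondegeneracy (cross-ratio) condition
`ι_i(w_q)ι_k(w_p) ≠ ι_i(w_p)ι_k(w_q)` for all `i ≠ k` and `p ≠ q`. -/
def Nondeg {F : Type*} [Field F] {n s : ℕ} (emb : Fin n → (F →+* ℝ))
    (w : Fin s → F) : Prop :=
  ∀ i k : Fin n, i ≠ k → ∀ p q : Fin s, p ≠ q →
    emb i (w q) * emb k (w p) ≠ emb i (w p) * emb k (w q)


/-!
For a fixed pair of embeddings `σ ≠ τ`, the `p`-th summand of the `V`-term is `ζ_fml(-1, a, x)`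
with `a_q = σ(v_q)/σ(v_p) - τ(v_q)/τ(v_p)`, and `ζ_fml(-1, a, x)` is, up to sign, the coefficient
of `t^(r+1)` in `∏_q g(a_q, x_q)`, where
`g(a, x) = ∑_l B_l(x) a^(l-1) t^l / l! = t e^(axt) / (e^(at) - 1)`.
The subdivision identity then holds summand by summand:
* the summands of `v` at `v₁` and `v₂` reappear unchanged in `v♯` and `v♭`, since adding `v_p` to
  another coordinate changes `a` by `σ(v_p)/σ(v_p) - τ(v_p)/τ(v_p) = 0`;
* the summands at `v₁ + v₂` of `v♯` and `v♭` cancel by the reflection `g(-a, 1-x) = -g(a, x)`;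
* every other summand splits by `g(a,x) g(b,y) = g(a, x-y+1) g(a+b, y) + g(a+b, x) g(b, y-x)`,
  which is an identity of exponentials once the denominators are cleared.
For (b), `g(a, 0) = g(a, 1) - t` produces the extra summands, which make up `V(v♮, ·)`.
-/

open PowerSeries

noncomputable def expSeries (a : ℝ) : PowerSeries ℝ := rescale a (exp ℝ)

noncomputable def bernoulliGenSeries (a x : ℝ) : PowerSeries ℝ :=
  mk fun l => Polynomial.aeval x (Polynomial.bernoulli l) * a ^ ((l : ℤ) - 1) / l.factorial

lemma expSeries_mul (a b : ℝ) : expSeries a * expSeries b = expSeries (a + b) :=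
  exp_mul_exp_eq_exp_add a b

lemma expSeries_zero : expSeries 0 = 1 := by
  simp [expSeries, rescale_zero]

lemma expSeries_sub_one_ne_zero {a : ℝ} (ha : a ≠ 0) : expSeries a - 1 ≠ 0 := by
  intro h
  exact ha (by simpa [expSeries, coeff_exp] using congrArg (coeff 1) h)

lemma bernoulliGenSeries_mul_expSeries_sub_one {a : ℝ} (ha : a ≠ 0) (x : ℝ) :
    bernoulliGenSeries a x * (expSeries a - 1) = X * expSeries (a * x) := by
  have hC : C a ≠ 0 := by simpa using ha
  -- Rescaling `t ↦ a t` in `∑ B_n(x) t^n / n! * (e^t - 1) = t e^(xt)`; the exponent `l - 1`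
  -- (rather than `l`) in `g` is why the factor `C a` has to be cancelled.
  have hgen : rescale a
        (mk fun n => Polynomial.aeval x ((1 / (n.factorial : ℚ)) • Polynomial.bernoulli n))
      = C a * bernoulliGenSeries a x := by
    ext n
    have hpow : a ^ n = a * a ^ ((n : ℤ) - 1) := by
      rw [← zpow_one_add₀ ha, add_sub_cancel, zpow_natCast]
    rw [rescale_mk, coeff_mk, coeff_C_mul, bernoulliGenSeries, coeff_mk, map_smul, Rat.smul_def,
      hpow]
    push_cast
    ring
  have H := congrArg (rescale a) (Polynomial.bernoulli_generating_function (A := ℝ) x)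
  rw [map_mul, map_sub, map_one, map_mul, rescale_X, rescale_rescale, hgen] at H
  apply mul_left_cancel₀ hC
  rw [expSeries, expSeries, mul_comm a x]
  linear_combination H

lemma bernoulliGenSeries_one_sub_zero {a : ℝ} (ha : a ≠ 0) :
    bernoulliGenSeries a 1 - bernoulliGenSeries a 0 = X := by
  apply mul_right_cancel₀ (expSeries_sub_one_ne_zero ha)
  rw [sub_mul, bernoulliGenSeries_mul_expSeries_sub_one ha,
    bernoulliGenSeries_mul_expSeries_sub_one ha, mul_one, mul_zero, expSeries_zero]
  ring

lemma bernoulliGenSeries_neg_one_sub {a : ℝ} (ha : a ≠ 0) (x : ℝ) :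
    bernoulliGenSeries (-a) (1 - x) = -bernoulliGenSeries a x := by
  apply mul_right_cancel₀ (expSeries_sub_one_ne_zero (neg_ne_zero.mpr ha))
  have hinv : expSeries (-a) * expSeries a = 1 := by
    rw [expSeries_mul, neg_add_cancel, expSeries_zero]
  have hshift : expSeries (-a * (1 - x)) = expSeries (a * x) * expSeries (-a) := by
    rw [expSeries_mul]; ring_nf
  rw [bernoulliGenSeries_mul_expSeries_sub_one (neg_ne_zero.mpr ha)]
  linear_combination X * hshift - expSeries (-a) * bernoulliGenSeries_mul_expSeries_sub_one ha x
    + bernoulliGenSeries a x * hinv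

lemma bernoulliGenSeries_one_add_neg_one {a : ℝ} (ha : a ≠ 0) :
    bernoulliGenSeries a 1 + bernoulliGenSeries (-a) 1 = X := by
  have h := bernoulliGenSeries_neg_one_sub ha 0
  rw [sub_zero] at h
  linear_combination h + bernoulliGenSeries_one_sub_zero ha

lemma bernoulliGenSeries_mul_split {a b : ℝ} (ha : a ≠ 0) (hb : b ≠ 0) (hab : a + b ≠ 0)
    (x y : ℝ) :
    bernoulliGenSeries a x * bernoulliGenSeries b y
      = bernoulliGenSeries a (x - y + 1) * bernoulliGenSeries (a + b) y
        + bernoulliGenSeries (a + b) x * bernoulliGenSeries b (y - x) := by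
  apply mul_right_cancel₀ (mul_ne_zero (mul_ne_zero (expSeries_sub_one_ne_zero ha)
    (expSeries_sub_one_ne_zero hb)) (expSeries_sub_one_ne_zero hab))
  have k1 := bernoulliGenSeries_mul_expSeries_sub_one ha x
  have k2 := bernoulliGenSeries_mul_expSeries_sub_one hb y
  have k3 := bernoulliGenSeries_mul_expSeries_sub_one ha (x - y + 1)
  have k4 := bernoulliGenSeries_mul_expSeries_sub_one hab y
  have k5 := bernoulliGenSeries_mul_expSeries_sub_one hab x
  have k6 := bernoulliGenSeries_mul_expSeries_sub_one hb (y - x)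
  have m1 : expSeries (a * x) * expSeries (b * y) = expSeries (a * x + b * y) :=
    expSeries_mul _ _
  have m2 : expSeries (a * (x - y + 1)) * expSeries ((a + b) * y)
      = expSeries (a * x + b * y) * expSeries a := by
    rw [expSeries_mul, expSeries_mul]; ring_nf
  have m3 : expSeries ((a + b) * x) * expSeries (b * (y - x)) = expSeries (a * x + b * y) := by
    rw [expSeries_mul]; ring_nf
  -- Times the three denominators, the two sides become `X² e^((ax+by)t) (e^((a+b)t) - 1)` and
  -- `X² e^((ax+by)t) (e^(at) (e^(bt) - 1) + (e^(at) - 1))`.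
  linear_combination
    (bernoulliGenSeries b y * (expSeries b - 1) * (expSeries (a + b) - 1)) * k1
    + (X * expSeries (a * x) * (expSeries (a + b) - 1)) * k2
    - (bernoulliGenSeries (a + b) y * (expSeries (a + b) - 1) * (expSeries b - 1)) * k3
    - (X * expSeries (a * (x - y + 1)) * (expSeries b - 1)) * k4
    - (bernoulliGenSeries b (y - x) * (expSeries b - 1) * (expSeries a - 1)) * k5
    - (X * expSeries ((a + b) * x) * (expSeries a - 1)) * k6
    + (X ^ 2 * (expSeries (a + b) - 1)) * m1 - (X ^ 2 * (expSeries b - 1)) * m2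
    - (X ^ 2 * (expSeries a - 1)) * m3 - X ^ 2 * expSeries (a * x + b * y) * expSeries_mul a b

lemma zetaFml_eq_coeff_prod (m : ℕ) {r : ℕ} (a x : Fin r → ℝ) :
    zetaFml m a x = (-1 : ℝ) ^ r * (m - 1).factorial *
      coeff (m + r - 1) (∏ i, bernoulliGenSeries (a i) (x i)) := by
  rw [zetaFml, coeff_prod]
  congr 1
  refine Finset.sum_nbij' (fun l => Finsupp.equivFunOnFinite.symm l) (fun l => ⇑l)
    (fun l hl => ?_) (fun l hl => ?_) (fun l _ => Finsupp.equivFunOnFinite.apply_symm_apply l)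
    (fun l _ => Finsupp.equivFunOnFinite_symm_coe l) (fun l _ => ?_)
  · simpa [Finset.mem_finsuppAntidiag] using Finset.Nat.mem_antidiagonalTuple.mp hl
  · exact Finset.Nat.mem_antidiagonalTuple.mpr (by simpa [Finset.mem_finsuppAntidiag] using hl)
  · simp [bernoulliGenSeries]

section zetaTwo

variable {r : ℕ} (A Z : Fin r → ℝ)

local notation "P" => ∏ i, bernoulliGenSeries (A i) (Z i)

lemma zetaFml_two_eq_coeff_prod : zetaFml 2 A Z = (-1) ^ r * coeff (r + 1) P := by
  rw [zetaFml_eq_coeff_prod, add_comm 2 r]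
  simp

lemma zetaFml_two_cons (a x : ℝ) :
    zetaFml 2 (Fin.cons a A) (Fin.cons x Z)
      = -(-1) ^ r * coeff (r + 2) (bernoulliGenSeries a x * P) := by
  rw [zetaFml_two_eq_coeff_prod, Fin.prod_univ_succ]
  simp [pow_succ]

lemma zetaFml_two_cons_cons (a b x y : ℝ) :
    zetaFml 2 (Fin.cons a (Fin.cons b A)) (Fin.cons x (Fin.cons y Z))
      = (-1) ^ r * coeff (r + 3) (bernoulliGenSeries a x * bernoulliGenSeries b y * P) := by
  rw [zetaFml_two_eq_coeff_prod, Fin.prod_univ_succ, Fin.prod_univ_succ]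
  simp [pow_succ, mul_assoc]

variable {A Z}

lemma zetaFml_two_cons_neg_one_sub {a : ℝ} (ha : a ≠ 0) (x : ℝ) :
    zetaFml 2 (Fin.cons (-a) A) (Fin.cons (1 - x) Z)
      = -zetaFml 2 (Fin.cons a A) (Fin.cons x Z) := by
  simp [zetaFml_two_cons, bernoulliGenSeries_neg_one_sub ha]

lemma zetaFml_two_cons_one_add_neg_add_eq_zero {a : ℝ} (ha : a ≠ 0) :
    zetaFml 2 (Fin.cons a A) (Fin.cons 1 Z) + zetaFml 2 (Fin.cons (-a) A) (Fin.cons 1 Z)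
      + zetaFml 2 A Z = 0 := by
  have h := congrArg (fun f => coeff (r + 2) (f * P)) (bernoulliGenSeries_one_add_neg_one ha)
  simp only [add_mul, map_add, coeff_succ_X_mul] at h
  rw [zetaFml_two_cons, zetaFml_two_cons, zetaFml_two_eq_coeff_prod]
  linear_combination (-(-1) ^ r) * h

lemma zetaFml_two_cons_cons_split {a b : ℝ} (ha : a ≠ 0) (hb : b ≠ 0) (hab : a + b ≠ 0)
    (x y : ℝ) :
    zetaFml 2 (Fin.cons a (Fin.cons b A)) (Fin.cons x (Fin.cons y Z))
      = zetaFml 2 (Fin.cons a (Fin.cons (a + b) A)) (Fin.cons (x - y + 1) (Fin.cons y Z))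
        + zetaFml 2 (Fin.cons (a + b) (Fin.cons b A)) (Fin.cons x (Fin.cons (y - x) Z)) := by
  simp only [zetaFml_two_cons_cons, bernoulliGenSeries_mul_split ha hb hab x y, add_mul, map_add,
    mul_add]

lemma zetaFml_two_cons_cons_zero {b : ℝ} (hb : b ≠ 0) (a x : ℝ) :
    zetaFml 2 (Fin.cons a (Fin.cons b A)) (Fin.cons x (Fin.cons 0 Z))
      = zetaFml 2 (Fin.cons a (Fin.cons b A)) (Fin.cons x (Fin.cons 1 Z))
        + zetaFml 2 (Fin.cons a A) (Fin.cons x Z) := by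
  have h : bernoulliGenSeries a x * bernoulliGenSeries b 0 * P
      = bernoulliGenSeries a x * bernoulliGenSeries b 1 * P
        - X * (bernoulliGenSeries a x * P) := by
    rw [← bernoulliGenSeries_one_sub_zero hb]
    ring
  rw [zetaFml_two_cons_cons, zetaFml_two_cons_cons, zetaFml_two_cons, h, map_sub,
    coeff_succ_X_mul]
  ring

lemma zetaFml_two_cons_cons_split_diag {a b : ℝ} (ha : a ≠ 0) (hb : b ≠ 0) (hab : a + b ≠ 0)
    (x : ℝ) :
    zetaFml 2 (Fin.cons a (Fin.cons b A)) (Fin.cons x (Fin.cons x Z))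
      = zetaFml 2 (Fin.cons a (Fin.cons (a + b) A)) (Fin.cons 1 (Fin.cons x Z))
        + zetaFml 2 (Fin.cons (a + b) (Fin.cons b A)) (Fin.cons x (Fin.cons 1 Z))
        + zetaFml 2 (Fin.cons (a + b) A) (Fin.cons x Z) := by
  rw [zetaFml_two_cons_cons_split ha hb hab, sub_self, zero_add,
    zetaFml_two_cons_cons_zero hb]
  ring

end zetaTwo

lemma Fin.removeNth_succ_cons {α : Type*} {n : ℕ} (x : α) (p : Fin (n + 1) → α)
    (i : Fin (n + 1)) :
    i.succ.removeNth (Fin.cons x p : Fin (n + 2) → α) = Fin.cons x (i.removeNth p) :=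
  Fin.cons_comp_succ_succAbove x p i

lemma Fin.removeNth_one_cons_cons {α : Type*} {n : ℕ} (x y : α) (p : Fin n → α) :
    (1 : Fin (n + 2)).removeNth (Fin.cons x (Fin.cons y p) : Fin (n + 2) → α) = Fin.cons x p := by
  simpa using Fin.removeNth_succ_cons x (Fin.cons y p) 0

lemma Fin.update_cons_cons_one {α : Type*} {n : ℕ} (x y z : α) (p : Fin n → α) :
    Function.update (Fin.cons x (Fin.cons y p) : Fin (n + 2) → α) 1 z
      = Fin.cons x (Fin.cons z p) := by
  rw [← Fin.succ_zero_eq_one, ← Fin.cons_update, Fin.update_cons_zero]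

section pair

variable {F : Type*} [Field F] (σ τ : F →+* ℝ)

noncomputable def crossDiff (c u : F) : ℝ := σ u / σ c - τ u / τ c

/-- `Nondeg emb w` is `CrossNondeg (emb i) (emb k) w` for all `i ≠ k`. -/
def CrossNondeg {s : ℕ} (w : Fin s → F) : Prop :=
  ∀ p q, p ≠ q → σ (w q) * τ (w p) ≠ σ (w p) * τ (w q)

noncomputable def pairTerm {s : ℕ} (c : F) (u : Fin s → F) (z : Fin s → ℝ) : ℝ :=
  zetaFml 2 (crossDiff σ τ c ∘ u) z * Real.log |σ c / τ c|

noncomputable def pairSum {s : ℕ} (v : Fin (s + 1) → F) (x : Fin (s + 1) → ℝ) : ℝ :=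
  ∑ p, pairTerm σ τ (v p) (p.removeNth v) (p.removeNth x)

variable {σ τ}

lemma crossDiff_add (c u u' : F) :
    crossDiff σ τ c (u + u') = crossDiff σ τ c u + crossDiff σ τ c u' := by
  simp only [crossDiff, map_add, add_div]
  ring

lemma crossDiff_self {c : F} (hc : c ≠ 0) : crossDiff σ τ c c = 0 := by
  simp [crossDiff, hc]

lemma crossDiff_self_add {c : F} (hc : c ≠ 0) (u : F) :
    crossDiff σ τ c (c + u) = crossDiff σ τ c u := by
  rw [crossDiff_add, crossDiff_self hc, zero_add]

lemma crossDiff_add_self {c : F} (hc : c ≠ 0) (u : F) :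
    crossDiff σ τ c (u + c) = crossDiff σ τ c u := by
  rw [add_comm, crossDiff_self_add hc]

lemma CrossNondeg.crossDiff_ne_zero {s : ℕ} {w : Fin s → F} (h : CrossNondeg σ τ w) {p q : Fin s}
    (hp : w p ≠ 0) (hpq : p ≠ q) : crossDiff σ τ (w p) (w q) ≠ 0 := by
  rw [crossDiff, sub_ne_zero, Ne, div_eq_div_iff ((map_ne_zero σ).mpr hp) ((map_ne_zero τ).mpr hp),
    mul_comm (τ _)]
  exact h p q hpq

lemma CrossNondeg.crossDiff_cons_cons_ne_zero {r : ℕ} {a b : F} {w : Fin r → F}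
    (h : CrossNondeg σ τ (Fin.cons a (Fin.cons b w))) (hb : b ≠ 0) (hw : ∀ t, w t ≠ 0) :
    crossDiff σ τ b a ≠ 0 ∧ ∀ t, crossDiff σ τ (w t) a ≠ 0 ∧ crossDiff σ τ (w t) b ≠ 0 := by
  refine ⟨by simpa using h.crossDiff_ne_zero (p := 1) (q := 0) (by simpa using hb) one_ne_zero,
    fun t => ⟨?_, ?_⟩⟩
  · simpa using h.crossDiff_ne_zero (p := t.succ.succ) (q := 0) (by simpa using hw t)
      (Fin.succ_ne_zero _)
  · simpa using h.crossDiff_ne_zero (p := t.succ.succ) (q := 1) (by simpa using hw t)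
      (by simp [Fin.ext_iff])

lemma pairSum_cons {r : ℕ} (c : F) (w : Fin r → F) (x : ℝ) (z : Fin r → ℝ) :
    pairSum σ τ (Fin.cons c w) (Fin.cons x z)
      = pairTerm σ τ c w z
        + ∑ t : Fin r, pairTerm σ τ (w t) (t.succ.removeNth (Fin.cons c w : Fin (r + 1) → F))
            (t.succ.removeNth (Fin.cons x z : Fin (r + 1) → ℝ)) := by
  simp [pairSum, Fin.sum_univ_succ]

lemma pairSum_cons_cons {r : ℕ} (a b : F) (w : Fin r → F) (x y : ℝ) (z : Fin r → ℝ) :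
    pairSum σ τ (Fin.cons a (Fin.cons b w)) (Fin.cons x (Fin.cons y z))
      = pairTerm σ τ a (Fin.cons b w) (Fin.cons y z) + pairTerm σ τ b (Fin.cons a w) (Fin.cons x z)
        + ∑ t : Fin r,
            pairTerm σ τ (w t) (t.succ.succ.removeNth (Fin.cons a (Fin.cons b w) : Fin (r + 2) → F))
              (t.succ.succ.removeNth (Fin.cons x (Fin.cons y z) : Fin (r + 2) → ℝ)) := by
  rw [pairSum_cons, Fin.sum_univ_succ]
  simp [Fin.removeNth_one_cons_cons, add_assoc]

end pair

section pairSubdivision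

variable {F : Type*} [Field F] {σ τ : F →+* ℝ} {m : ℕ}

lemma crossDiff_add_right_eq_neg {a b : F} (hab : a + b ≠ 0) :
    crossDiff σ τ (a + b) b = -crossDiff σ τ (a + b) a := by
  rw [eq_neg_iff_add_eq_zero, ← crossDiff_add, add_comm b, crossDiff_self hab]

lemma pairTerm_cons_self_add {c : F} (hc : c ≠ 0) (u : F) (f : Fin m → F) (z : Fin (m + 1) → ℝ) :
    pairTerm σ τ c (Fin.cons (c + u) f) z = pairTerm σ τ c (Fin.cons u f) z := by
  simp only [pairTerm, Fin.comp_cons, crossDiff_self_add hc]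

lemma pairTerm_cons_add_self {c : F} (hc : c ≠ 0) (u : F) (f : Fin m → F) (z : Fin (m + 1) → ℝ) :
    pairTerm σ τ c (Fin.cons (u + c) f) z = pairTerm σ τ c (Fin.cons u f) z := by
  simp only [pairTerm, Fin.comp_cons, crossDiff_add_self hc]

lemma pairTerm_cons_add_cons_one_sub_eq_zero {a b : F} (hab : a + b ≠ 0)
    (h : crossDiff σ τ (a + b) a ≠ 0) (w : Fin m → F) (x : ℝ) (z : Fin m → ℝ) :
    pairTerm σ τ (a + b) (Fin.cons a w) (Fin.cons x z)
      + pairTerm σ τ (a + b) (Fin.cons b w) (Fin.cons (1 - x) z) = 0 := by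
  simp only [pairTerm, Fin.comp_cons, crossDiff_add_right_eq_neg hab,
    zetaFml_two_cons_neg_one_sub h]
  ring

lemma pairTerm_cons_one_add_cons_one_add_eq_zero {a b : F} (hab : a + b ≠ 0)
    (h : crossDiff σ τ (a + b) a ≠ 0) (w : Fin m → F) (z : Fin m → ℝ) :
    pairTerm σ τ (a + b) (Fin.cons a w) (Fin.cons 1 z)
      + pairTerm σ τ (a + b) (Fin.cons b w) (Fin.cons 1 z) + pairTerm σ τ (a + b) w z = 0 := by
  simp only [pairTerm, Fin.comp_cons, crossDiff_add_right_eq_neg hab, ← add_mul,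
    zetaFml_two_cons_one_add_neg_add_eq_zero h, zero_mul]

lemma pairTerm_cons_cons_split {c a b : F} (ha : crossDiff σ τ c a ≠ 0)
    (hb : crossDiff σ τ c b ≠ 0) (hab : crossDiff σ τ c (a + b) ≠ 0) (u : Fin m → F)
    (x y : ℝ) (z : Fin m → ℝ) :
    pairTerm σ τ c (Fin.cons a (Fin.cons b u)) (Fin.cons x (Fin.cons y z))
      = pairTerm σ τ c (Fin.cons a (Fin.cons (a + b) u)) (Fin.cons (x - y + 1) (Fin.cons y z))
        + pairTerm σ τ c (Fin.cons (a + b) (Fin.cons b u)) (Fin.cons x (Fin.cons (y - x) z)) := by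
  rw [crossDiff_add] at hab
  simp only [pairTerm, Fin.comp_cons, crossDiff_add, zetaFml_two_cons_cons_split ha hb hab, add_mul]

lemma pairTerm_cons_cons_split_diag {c a b : F} (ha : crossDiff σ τ c a ≠ 0)
    (hb : crossDiff σ τ c b ≠ 0) (hab : crossDiff σ τ c (a + b) ≠ 0) (u : Fin m → F)
    (x : ℝ) (z : Fin m → ℝ) :
    pairTerm σ τ c (Fin.cons a (Fin.cons b u)) (Fin.cons x (Fin.cons x z))
      = pairTerm σ τ c (Fin.cons a (Fin.cons (a + b) u)) (Fin.cons 1 (Fin.cons x z))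
        + pairTerm σ τ c (Fin.cons (a + b) (Fin.cons b u)) (Fin.cons x (Fin.cons 1 z))
        + pairTerm σ τ c (Fin.cons (a + b) u) (Fin.cons x z) := by
  rw [crossDiff_add] at hab
  simp only [pairTerm, Fin.comp_cons, crossDiff_add, zetaFml_two_cons_cons_split_diag ha hb hab,
    add_mul]

variable {r : ℕ} {a b : F} {w : Fin r → F}

theorem pairSum_subdivision (ha : a ≠ 0) (hb : b ≠ 0) (hab : a + b ≠ 0) (hw : ∀ t, w t ≠ 0)
    (hnd : CrossNondeg σ τ (Fin.cons a (Fin.cons b w)))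
    (hndS : CrossNondeg σ τ (Fin.cons a (Fin.cons (a + b) w))) (x y : ℝ) (z : Fin r → ℝ) :
    pairSum σ τ (Fin.cons a (Fin.cons b w)) (Fin.cons x (Fin.cons y z))
      = pairSum σ τ (Fin.cons a (Fin.cons (a + b) w)) (Fin.cons (x - y + 1) (Fin.cons y z))
        + pairSum σ τ (Fin.cons (a + b) (Fin.cons b w)) (Fin.cons x (Fin.cons (y - x) z)) := by
  obtain ⟨-, hd⟩ := hnd.crossDiff_cons_cons_ne_zero hb hw
  obtain ⟨hs, hds⟩ := hndS.crossDiff_cons_cons_ne_zero hab hw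
  have hsplit : ∀ t : Fin r,
      pairTerm σ τ (w t) (t.succ.succ.removeNth (Fin.cons a (Fin.cons b w) : Fin (r + 2) → F))
          (t.succ.succ.removeNth (Fin.cons x (Fin.cons y z) : Fin (r + 2) → ℝ))
        = pairTerm σ τ (w t)
            (t.succ.succ.removeNth (Fin.cons a (Fin.cons (a + b) w) : Fin (r + 2) → F))
            (t.succ.succ.removeNth (Fin.cons (x - y + 1) (Fin.cons y z) : Fin (r + 2) → ℝ))
          + pairTerm σ τ (w t)
            (t.succ.succ.removeNth (Fin.cons (a + b) (Fin.cons b w) : Fin (r + 2) → F))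
            (t.succ.succ.removeNth (Fin.cons x (Fin.cons (y - x) z) : Fin (r + 2) → ℝ)) := by
    intro t
    -- `w` can only be split around `t` once `r` is visibly a successor.
    obtain ⟨m, rfl⟩ : ∃ m, r = m + 1 := ⟨r - 1, by have := t.pos; omega⟩
    simp only [Fin.removeNth_succ_cons]
    exact pairTerm_cons_cons_split (hd t).1 (hd t).2 (hds t).2 _ _ _ _
  have hcancel := pairTerm_cons_add_cons_one_sub_eq_zero hab hs w (x - y + 1) z
  rw [show 1 - (x - y + 1) = y - x by ring] at hcancel
  rw [pairSum_cons_cons, pairSum_cons_cons, pairSum_cons_cons, pairTerm_cons_self_add ha,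
    pairTerm_cons_add_self hb, Finset.sum_congr rfl fun t _ => hsplit t, Finset.sum_add_distrib]
  linear_combination -hcancel

theorem pairSum_subdivision_diag (ha : a ≠ 0) (hb : b ≠ 0) (hab : a + b ≠ 0) (hw : ∀ t, w t ≠ 0)
    (hnd : CrossNondeg σ τ (Fin.cons a (Fin.cons b w)))
    (hndS : CrossNondeg σ τ (Fin.cons a (Fin.cons (a + b) w))) (x : ℝ) (z : Fin r → ℝ) :
    pairSum σ τ (Fin.cons a (Fin.cons b w)) (Fin.cons x (Fin.cons x z))
      = pairSum σ τ (Fin.cons a (Fin.cons (a + b) w)) (Fin.cons 1 (Fin.cons x z))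
        + pairSum σ τ (Fin.cons (a + b) (Fin.cons b w)) (Fin.cons x (Fin.cons 1 z))
        + pairSum σ τ (Fin.cons (a + b) w) (Fin.cons x z) := by
  obtain ⟨-, hd⟩ := hnd.crossDiff_cons_cons_ne_zero hb hw
  obtain ⟨hs, hds⟩ := hndS.crossDiff_cons_cons_ne_zero hab hw
  have hsplit : ∀ t : Fin r,
      pairTerm σ τ (w t) (t.succ.succ.removeNth (Fin.cons a (Fin.cons b w) : Fin (r + 2) → F))
          (t.succ.succ.removeNth (Fin.cons x (Fin.cons x z) : Fin (r + 2) → ℝ))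
        = pairTerm σ τ (w t)
            (t.succ.succ.removeNth (Fin.cons a (Fin.cons (a + b) w) : Fin (r + 2) → F))
            (t.succ.succ.removeNth (Fin.cons 1 (Fin.cons x z) : Fin (r + 2) → ℝ))
          + pairTerm σ τ (w t)
            (t.succ.succ.removeNth (Fin.cons (a + b) (Fin.cons b w) : Fin (r + 2) → F))
            (t.succ.succ.removeNth (Fin.cons x (Fin.cons 1 z) : Fin (r + 2) → ℝ))
          + pairTerm σ τ (w t) (t.succ.removeNth (Fin.cons (a + b) w : Fin (r + 1) → F))
            (t.succ.removeNth (Fin.cons x z : Fin (r + 1) → ℝ)) := by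
    intro t
    obtain ⟨m, rfl⟩ : ∃ m, r = m + 1 := ⟨r - 1, by have := t.pos; omega⟩
    simp only [Fin.removeNth_succ_cons]
    exact pairTerm_cons_cons_split_diag (hd t).1 (hd t).2 (hds t).2 _ _ _
  have hcancel := pairTerm_cons_one_add_cons_one_add_eq_zero hab hs w z
  rw [pairSum_cons_cons, pairSum_cons_cons, pairSum_cons_cons, pairSum_cons,
    pairTerm_cons_self_add ha, pairTerm_cons_add_self hb, Finset.sum_congr rfl fun t _ => hsplit t,
    Finset.sum_add_distrib, Finset.sum_add_distrib]
  linear_combination -hcancel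

end pairSubdivision

noncomputable def vTermCombination (n : ℕ) (J : Fin (n + 1) → Fin (n + 1) → ℝ) : ℝ :=
  -(1 / (n + 1 : ℝ)) * ∑ k ∈ Finset.univ.filter (fun k : Fin (n + 1) => k ≠ 0), J 0 k
    + (1 / (n + 1 : ℝ) ^ 2) *
      ∑ i : Fin (n + 1), ∑ k ∈ Finset.univ.filter (fun k : Fin (n + 1) => i < k), J i k

lemma Vterm_eq_vTermCombination {F : Type*} [Field F] {n s : ℕ} (emb : Fin (n + 1) → (F →+* ℝ))
    (v : Fin (s + 1) → F) (x : Fin (s + 1) → ℝ) :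
    Vterm emb v x = vTermCombination n (fun i k => pairSum (emb i) (emb k) v x) :=
  rfl

lemma vTermCombination_add {n : ℕ} (J J' : Fin (n + 1) → Fin (n + 1) → ℝ) :
    vTermCombination n (J + J') = vTermCombination n J + vTermCombination n J' := by
  simp only [vTermCombination, Pi.add_apply, Finset.sum_add_distrib]
  ring

lemma vTermCombination_congr {n : ℕ} {J J' : Fin (n + 1) → Fin (n + 1) → ℝ}
    (h : ∀ i k, i ≠ k → J i k = J' i k) : vTermCombination n J = vTermCombination n J' := by
  unfold vTermCombination
  congr 2
  · exact Finset.sum_congr rfl fun k hk => h 0 k (Finset.mem_filter.mp hk).2.symm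
  · exact Finset.sum_congr rfl fun i _ =>
      Finset.sum_congr rfl fun k hk => h i k (Finset.mem_filter.mp hk).2.ne

theorem Vterm_cone_subdivision_general {F : Type*} [Field F] (n : ℕ)
    (emb : Fin (n + 2) → (F →+* ℝ))
    (r : ℕ) (v : Fin (r + 2) → F) (hv : ∀ p, v p ≠ 0) (hv12 : v 0 + v 1 ≠ 0)
    (hnd : Nondeg emb v)
    (hndS : Nondeg emb (Function.update v 1 (v 0 + v 1))) :
    (∀ x : Fin (r + 2) → ℝ,
      Vterm emb v x
        = Vterm emb (Function.update v 1 (v 0 + v 1)) (Function.update x 0 (x 0 - x 1 + 1))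
          + Vterm emb (Function.update v 0 (v 0 + v 1)) (Function.update x 1 (x 1 - x 0)))
    ∧ (∀ (x : ℝ) (x' : Fin r → ℝ),
      Vterm emb v (Fin.cons x (Fin.cons x x'))
        = Vterm emb (Function.update v 1 (v 0 + v 1)) (Fin.cons 1 (Fin.cons x x'))
          + Vterm emb (Function.update v 0 (v 0 + v 1)) (Fin.cons x (Fin.cons 1 x'))
          + Vterm emb (Fin.cons (v 0 + v 1) (fun i : Fin r => v i.succ.succ))
              (Fin.cons x x')) := by
  cases v using Fin.consCases with | cons a v => ?_
  cases v using Fin.consCases with | cons b w => ?_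
  simp only [Fin.forall_fin_succ, Fin.cons_zero, Fin.cons_one, Fin.cons_succ] at hv hv12
  obtain ⟨ha, hb, hw⟩ := hv
  simp only [Fin.cons_zero, Fin.cons_one, Fin.cons_succ, Fin.update_cons_zero,
    Fin.update_cons_cons_one] at hndS ⊢
  simp only [Vterm_eq_vTermCombination, ← vTermCombination_add]
  refine ⟨fun x => ?_, fun x z => ?_⟩
  · cases x using Fin.consCases with | cons x y => ?_
    cases y using Fin.consCases with | cons y z => ?_
    simp only [Fin.cons_zero, Fin.cons_one, Fin.update_cons_zero, Fin.update_cons_cons_one]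
    exact vTermCombination_congr fun i k hik =>
      pairSum_subdivision ha hb hv12 hw (hnd i k hik) (hndS i k hik) x y z
  · exact vTermCombination_congr fun i k hik =>
      pairSum_subdivision_diag ha hb hv12 hw (hnd i k hik) (hndS i k hik) x z

/-- invariance of the `V`-term under the elementary cone subdivision
`v ↦ v♯ = (v₁, v₁+v₂, v₃, …)`, `v♭ = (v₁+v₂, v₂, v₃, …)`, `v♮ = (v₁+v₂, v₃, …)`. -/
theorem Vterm_cone_subdivision {F : Type*} [Field F] [NumberField F] (n : ℕ)
    (hdeg : Module.finrank ℚ F = n + 2)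
    (emb : Fin (n + 2) → (F →+* ℝ)) (hemb : Function.Bijective emb)
    (r : ℕ) (v : Fin (r + 2) → F) (hv : ∀ p, v p ≠ 0) (hv12 : v 0 + v 1 ≠ 0)
    (hnd : Nondeg emb v)
    (hndS : Nondeg emb (Function.update v 1 (v 0 + v 1)))
    (hndB : Nondeg emb (Function.update v 0 (v 0 + v 1)))
    (hndN : Nondeg emb (Fin.cons (v 0 + v 1) (fun i : Fin r => v i.succ.succ))) :
    (∀ x : Fin (r + 2) → ℝ,
      Vterm emb v x
        = Vterm emb (Function.update v 1 (v 0 + v 1)) (Function.update x 0 (x 0 - x 1 + 1))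
          + Vterm emb (Function.update v 0 (v 0 + v 1)) (Function.update x 1 (x 1 - x 0)))
    ∧ (∀ (x : ℝ) (x' : Fin r → ℝ),
      Vterm emb v (Fin.cons x (Fin.cons x x'))
        = Vterm emb (Function.update v 1 (v 0 + v 1)) (Fin.cons 1 (Fin.cons x x'))
          + Vterm emb (Function.update v 0 (v 0 + v 1)) (Fin.cons x (Fin.cons 1 x'))
          + Vterm emb (Fin.cons (v 0 + v 1) (fun i : Fin r => v i.succ.succ))
              (Fin.cons x x')) :=
  Vterm_cone_subdivision_general n emb r v hv hv12 hnd hndS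
end
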